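/- In any sequential effect algebra, for every element a, the element a ∘ a⊥ is summable with itself, i.e. (a ∘ a⊥) ⊕ (a ∘ a⊥) is defined. -/
import Mathlib


universe u

/-- `EAle orth add a b` : the effect-algebra order `a ≤ b` iff `∃ c, a ⊕ c = b`. -/
def EAle {α : Type u} (orth : α → α → Prop) (add : α → α → α) (a b : α) : Prop :=
  ∃ c, orth a c ∧ add a c = b

/-- An effect algebra: partial sum `add` (defined when `orth` holds), zero, complement. -/
structure EffectAlgebra (α : Type u) where
  orth : α → α → Prop
  add : α → α → α
  zero : α
  compl : α → α
  orth_comm : ∀ a b, orth a b → orth b a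
  add_comm' : ∀ a b, orth a b → add a b = add b a
  orth_zero : ∀ a, orth a zero
  add_zero' : ∀ a, add a zero = a
  orth_assoc₁ : ∀ a b c, orth a b → orth (add a b) c → orth b c
  orth_assoc₂ : ∀ a b c, orth a b → orth (add a b) c → orth a (add b c)
  add_assoc' : ∀ a b c, orth a b → orth (add a b) c → add (add a b) c = add a (add b c)
  orth_compl : ∀ a, orth a (compl a)
  add_compl : ∀ a, add a (compl a) = compl zero
  compl_unique : ∀ a b, orth a b → add a b = compl zero → b = compl a
  orth_one : ∀ a, orth a (compl zero) → a = zero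

namespace EffectAlgebra
variable {α : Type u}
/-- The effect-algebra order. -/
def le (E : EffectAlgebra α) : α → α → Prop := EAle E.orth E.add
/-- The unit `1 := 0⊥`. -/
def one (E : EffectAlgebra α) : α := E.compl E.zero
end EffectAlgebra

/-- A sequential effect algebra: an effect algebra with a total product `seq`
satisfying S1–S5. -/
structure SEA (α : Type u) extends EffectAlgebra α where
  seq : α → α → α
  seq_orth : ∀ a b c, orth b c → orth (seq a b) (seq a c)                                -- S1
  seq_add : ∀ a b c, orth b c → seq a (add b c) = add (seq a b) (seq a c)                -- S1
  one_seq : ∀ a, seq (compl zero) a = a                                                  -- S2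
  seq_zero_symm : ∀ a b, seq a b = zero → seq b a = zero                                 -- S3
  comm_compl : ∀ a b, seq a b = seq b a → seq a (compl b) = seq (compl b) a              -- S4
  comm_assoc : ∀ a b c, seq a b = seq b a → seq a (seq b c) = seq (seq a b) c            -- S4
  comm_seq : ∀ a b c, seq c a = seq a c → seq c b = seq b c →
    seq c (seq a b) = seq (seq a b) c                                                    -- S5
  comm_add : ∀ a b c, seq c a = seq a c → seq c b = seq b c → orth a b →
    seq c (add a b) = seq (add a b) c                                                    -- S5

theorem EA_compl_compl {α : Type u} (E : EffectAlgebra α) (a : α) :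
    E.compl (E.compl a) = a := by
  have h := E.compl_unique (E.compl a) a (E.orth_comm _ _ (E.orth_compl a))
    (by rw [E.add_comm' _ _ (E.orth_comm _ _ (E.orth_compl a))]; exact E.add_compl a)
  exact h.symm

theorem EA_cancel {α : Type u} (E : EffectAlgebra α) (a b c : α)
    (hab : E.orth a b) (hac : E.orth a c) (h : E.add a b = E.add a c) : b = c := by
  set d := E.compl (E.add a b) with hd
  have hod : E.orth (E.add a b) d := E.orth_compl _
  have hsum : E.add (E.add a b) d = E.compl E.zero := E.add_compl _
  have key : ∀ x, E.orth a x → E.orth (E.add a x) d → E.add (E.add a x) d = E.compl E.zero →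
      E.add a d = E.compl x := by
    intro x hax ho hs
    have hxa : E.orth x a := E.orth_comm _ _ hax
    have hcomm : E.add a x = E.add x a := E.add_comm' _ _ hax
    have ho' : E.orth (E.add x a) d := by rwa [hcomm] at ho
    have h1 : E.orth x (E.add a d) := E.orth_assoc₂ x a d hxa ho'
    have h2 : E.add x (E.add a d) = E.compl E.zero := by
      rw [← E.add_assoc' x a d hxa ho', ← hcomm]; exact hs
    exact E.compl_unique x (E.add a d) h1 h2
  have hb : E.add a d = E.compl b := key b hab hod hsum
  have hc : E.add a d = E.compl c := key c hac (by rwa [h] at hod) (by rwa [h] at hsum)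
  calc b = E.compl (E.compl b) := (EA_compl_compl E b).symm
    _ = E.compl (E.compl c) := by rw [← hb, hc]
    _ = c := EA_compl_compl E c

theorem SEA_seq_zero {α : Type u} (E : SEA α) (a : α) : E.seq a E.zero = E.zero := by
  have h0 : E.orth E.zero E.zero := E.orth_zero E.zero
  have h1 : E.seq a E.zero = E.add (E.seq a E.zero) (E.seq a E.zero) := by
    conv_lhs => rw [← E.add_zero' E.zero]
    exact E.seq_add a E.zero E.zero h0
  have hx : E.orth (E.seq a E.zero) (E.seq a E.zero) := E.seq_orth a E.zero E.zero h0
  have := EA_cancel E.toEffectAlgebra (E.seq a E.zero) (E.seq a E.zero) E.zero hx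
    (E.orth_zero _) (by rw [← h1, E.add_zero'])
  exact this

theorem SEA_seq_one {α : Type u} (E : SEA α) (a : α) :
    E.seq a (E.compl E.zero) = a := by
  have h0 : E.seq a E.zero = E.seq E.zero a := by
    rw [SEA_seq_zero E a, E.seq_zero_symm a E.zero (SEA_seq_zero E a)]
  have := E.comm_compl a E.zero h0
  rw [this, E.one_seq]

/-- In a SEA, `a ∘ a⊥` is summable with itself. -/
theorem sea_seq_compl_self_summable {α : Type u} (E : SEA α) (a : α) :
    E.orth (E.seq a (E.compl a)) (E.seq a (E.compl a)) := by
  set b := E.compl a with hb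
  set x := E.seq a b with hx
  set s := E.seq a a with hs
  set t := E.seq b b with ht
  have hoab : E.orth a b := E.orth_compl a
  have hoba : E.orth b a := E.orth_comm _ _ hoab
  -- x commutes: a∘a⊥ = a⊥∘a
  have hcomm : E.seq a b = E.seq b a := E.comm_compl a a rfl
  -- a = x + s
  have ha : a = E.add x s := by
    have h1 : E.seq a (E.add b a) = E.add x s := E.seq_add a b a hoba
    have h2 : E.add b a = E.compl E.zero := by
      rw [E.add_comm' b a hoba]; exact E.add_compl a
    rw [h2, SEA_seq_one E a] at h1
    exact h1
  have hoxs : E.orth x s := E.seq_orth a b a hoba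
  -- b = x + t
  have hbt : b = E.add x t := by
    have h1 : E.seq b (E.add a b) = E.add (E.seq b a) t := E.seq_add b a b hoab
    rw [E.add_compl a, SEA_seq_one E b, ← hcomm] at h1
    exact h1
  have hoxt : E.orth x t := by
    have := E.seq_orth b a b hoab
    rwa [← hcomm] at this
  -- orth (x+s) (x+t) from orth a a⊥
  have hmain : E.orth (E.add x s) (E.add x t) := by rw [← ha, ← hbt]; exact hoab
  -- reduce to orth x (x+t)
  have hsx : E.orth s x := E.orth_comm _ _ hoxs
  have hmain' : E.orth (E.add s x) (E.add x t) := by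
    rwa [← E.add_comm' x s hoxs]
  have h1 : E.orth x (E.add x t) := E.orth_assoc₁ s x (E.add x t) hsx hmain'
  -- reduce to orth x x
  have htx : E.orth t x := E.orth_comm _ _ hoxt
  have h2 : E.orth (E.add t x) x := E.orth_comm _ _ (by rwa [E.add_comm' x t hoxt] at h1)
  exact E.orth_assoc₁ t x x htx h2
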